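/- arXiv:2305.03220 — 9 statements merged into one kernel-verified Lean document; each statement's English description precedes it below -/
import Mathlib

section
/- Let φ : Σ → Δ be a combinatorial morphism of finite posets and β ∈ Δ. Then the preimage φ⁻¹(↑β) is the disjoint union of the principal up-sets ↑α over α ∈ φ⁻¹(β), and these up-sets are exactly the connected components of φ⁻¹(↑β). -/
/-- The Alexandrov (up-set) topology on a preorder: open sets are the up-sets. -/
def upTop (P : Type*) [Preorder P] : TopologicalSpace P where
  IsOpen s := IsUpperSet s
  isOpen_univ := isUpperSet_univ
  isOpen_inter := fun _ _ hs ht => hs.inter ht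
  isOpen_sUnion := fun _ h => isUpperSet_sUnion h

/-- A combinatorial morphism of posets: an order-preserving map sending each
principal down-set `Iic α` order-isomorphically onto `Iic (φ α)`. -/
def Combinatorial {P Q : Type*} [PartialOrder P] [PartialOrder Q] (φ : P → Q) : Prop :=
  Monotone φ ∧ ∀ α : P, Set.BijOn φ (Set.Iic α) (Set.Iic (φ α)) ∧
    ∀ x ∈ Set.Iic α, ∀ y ∈ Set.Iic α, (x ≤ y ↔ φ x ≤ φ y)

/-- `m` is balanced on the up-set `V` with respect to `φ`. -/
def BalancedMap {P Q : Type*} [PartialOrder P] [PartialOrder Q]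
    (φ : P → Q) (V : Set P) (m : P → ℤ) : Prop :=
  ∀ α ∈ V, ∀ β : Q, φ α ⋖ β → m α = ∑ᶠ γ ∈ {γ : P | φ γ = β ∧ α ⋖ γ}, m γ

lemma upTop_isOpen_iff {P : Type*} [Preorder P] (s : Set P) :
    @IsOpen P (upTop P) s ↔ IsUpperSet s := Iff.rfl

lemma isPreconnected_Ici_upTop {P : Type*} [Preorder P] (α : P) :
    @IsPreconnected P (upTop P) (Set.Ici α) := by
  letI : TopologicalSpace P := upTop P
  intro u v hu hv hsub ⟨x, hxI, hxu⟩ ⟨y, hyI, hyv⟩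
  have hu' : IsUpperSet u := hu
  have hv' : IsUpperSet v := hv
  rcases hsub (Set.self_mem_Ici (a := α)) with hau | hav
  · exact ⟨y, hyI, hu' hyI hau, hyv⟩
  · exact ⟨x, hxI, hxu, hv' hxI hav⟩

/-- For a combinatorial morphism of finite posets, the preimage of a principal
up-set `Ici β` is the disjoint union of the principal up-sets `Ici α` over
`α` in the fibre of `β`, and these are exactly its connected components. -/
theorem preimage_Ici_eq_disjoint_union_components {P Q : Type*}
    [PartialOrder P] [PartialOrder Q] [Fintype P] [Fintype Q]
    (φ : P → Q) (hφ : Combinatorial φ) (β : Q) :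
    (φ ⁻¹' Set.Ici β = ⋃ α ∈ φ ⁻¹' {β}, Set.Ici α) ∧
    ((φ ⁻¹' {β}).PairwiseDisjoint Set.Ici) ∧
    ({C : Set P | ∃ x ∈ φ ⁻¹' Set.Ici β,
        C = @connectedComponentIn P (upTop P) (φ ⁻¹' Set.Ici β) x}
      = Set.Ici '' (φ ⁻¹' {β})) := by
  letI : TopologicalSpace P := upTop P
  set S : Set P := φ ⁻¹' Set.Ici β with hSdef
  have huniq : ∀ {x α₁ α₂ : P}, α₁ ≤ x → α₂ ≤ x → φ α₁ = φ α₂ → α₁ = α₂ := by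
    intro x α₁ α₂ h1 h2 he
    exact (hφ.2 x).1.2.1 h1 h2 he
  have hex : ∀ x : P, x ∈ S → ∃ α, φ α = β ∧ α ≤ x := by
    intro x hx
    obtain ⟨α, hα, hfα⟩ := (hφ.2 x).1.2.2 (show β ∈ Set.Iic (φ x) from hx)
    exact ⟨α, hfα, hα⟩
  have hS : S = ⋃ α ∈ φ ⁻¹' {β}, Set.Ici α := by
    ext x
    simp only [Set.mem_iUnion, Set.mem_preimage, Set.mem_singleton_iff, Set.mem_Ici]
    constructor
    · intro hx; obtain ⟨α, h1, h2⟩ := hex x hx; exact ⟨α, h1, h2⟩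
    · rintro ⟨α, rfl, hle⟩; exact hφ.1 hle
  have hdisj : (φ ⁻¹' {β}).PairwiseDisjoint Set.Ici := by
    intro a ha b hb hne
    refine Set.disjoint_left.2 fun x hx hx' => hne ?_
    exact huniq hx hx' (ha.trans hb.symm)
  refine ⟨hS, hdisj, ?_⟩
  have hIciS : ∀ α : P, φ α = β → Set.Ici α ⊆ S := by
    intro α hα x hx
    exact show β ≤ φ x from hα ▸ hφ.1 hx
  -- a preconnected subset of S meeting Ici α (α in the fibre) is contained in Ici α
  have hkey : ∀ (T : Set P), IsPreconnected T → T ⊆ S → ∀ α : P, φ α = β →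
      ∀ x ∈ T, α ≤ x → T ⊆ Set.Ici α := by
    intro T hT hTS α hα x hxT hαx
    by_contra hnot
    obtain ⟨y, hyT, hyI⟩ := Set.not_subset.1 hnot
    set v : Set P := ⋃ a ∈ {a : P | φ a = β ∧ a ≠ α}, Set.Ici a with hv
    have hvopen : IsOpen v := by
      refine (upTop_isOpen_iff v).2 ?_
      exact isUpperSet_iUnion₂ fun a _ => isUpperSet_Ici a
    have huopen : IsOpen (Set.Ici α) := (upTop_isOpen_iff _).2 (isUpperSet_Ici α)
    have hsub : T ⊆ Set.Ici α ∪ v := by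
      intro z hz
      obtain ⟨a, ha, haz⟩ := hex z (hTS hz)
      by_cases hcase : a = α
      · exact Or.inl (hcase ▸ haz)
      · exact Or.inr (Set.mem_biUnion ⟨ha, hcase⟩ haz)
    have hnu : (T ∩ Set.Ici α).Nonempty := ⟨x, hxT, hαx⟩
    have hnv : (T ∩ v).Nonempty := by
      obtain ⟨a, ha, haz⟩ := hex y (hTS hyT)
      have hne : a ≠ α := fun h => hyI (h ▸ haz)
      exact ⟨y, hyT, Set.mem_biUnion ⟨ha, hne⟩ haz⟩
    obtain ⟨z, _, hz1, hz2⟩ := hT (Set.Ici α) v huopen hvopen hsub hnu hnv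
    obtain ⟨a, ⟨ha, hane⟩, haz⟩ := Set.mem_iUnion₂.1 hz2
    exact hane (huniq haz hz1 (ha.trans hα.symm))
  have hcomp : ∀ x ∈ S, ∀ α : P, φ α = β → α ≤ x →
      connectedComponentIn S x = Set.Ici α := by
    intro x hxS α hα hαx
    apply Set.Subset.antisymm
    · exact hkey _ (isPreconnected_connectedComponentIn) (connectedComponentIn_subset S x)
        α hα x (mem_connectedComponentIn hxS) hαx
    · exact (isPreconnected_Ici_upTop α).subset_connectedComponentIn hαx (hIciS α hα)
  ext C
  simp only [Set.mem_setOf_eq, Set.mem_image, Set.mem_preimage, Set.mem_singleton_iff]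
  constructor
  · rintro ⟨x, hxS, rfl⟩
    obtain ⟨α, hα, hαx⟩ := hex x hxS
    exact ⟨α, hα, (hcomp x hxS α hα hαx).symm⟩
  · rintro ⟨α, hα, rfl⟩
    have hαS : α ∈ S := by simp [hSdef, hα]
    exact ⟨α, hαS, (hcomp α hαS α hα le_rfl).symm⟩
end

section
/- Let φ : Σ → Δ be a combinatorial morphism of finite posets, 𝒱 ⊆ Σ an up-set, and m : 𝒱 → ℤ≥1 a balanced map. For any α ∈ Σ and μ, ν ∈ ↑φ(α) with μ ⋖ ν and φ⁻¹(μ) ∩ ↑α ⊆ 𝒱, the sum of m over φ⁻¹(μ) ∩ ↑α equals the sum of m over φ⁻¹(ν) ∩ ↑α. -/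
/-- For a balanced map on an up-set, the weighted count of the fibre over `μ`
inside `Ici α` equals the weighted count of the fibre over `ν`, when `μ ⋖ ν`. -/
theorem balanced_sum_fibre_eq {P Q : Type*}
    [PartialOrder P] [PartialOrder Q] [Fintype P] [Fintype Q]
    (φ : P → Q) (hφ : Combinatorial φ) (V : Set P) (hV : IsUpperSet V)
    (m : P → ℤ) (hm : ∀ x ∈ V, 1 ≤ m x) (hb : BalancedMap φ V m)
    (α : P) (μ ν : Q) (hμ : φ α ≤ μ) (hν : φ α ≤ ν) (hcov : μ ⋖ ν)
    (hsub : φ ⁻¹' {μ} ∩ Set.Ici α ⊆ V) :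
    ∑ᶠ γ ∈ φ ⁻¹' {μ} ∩ Set.Ici α, m γ = ∑ᶠ γ ∈ φ ⁻¹' {ν} ∩ Set.Ici α, m γ := by
  classical
  obtain ⟨hmono, hcomb⟩ := hφ
  -- key: each δ in the ν-fibre above α has a unique element of the μ-fibre covered by it,
  -- and that element lies above α.
  have key : ∀ δ : P, φ δ = ν → α ≤ δ →
      ∃ γ, φ γ = μ ∧ γ ⋖ δ ∧ α ≤ γ ∧ ∀ γ', φ γ' = μ → γ' ⋖ δ → γ' = γ := by
    intro δ hδ hαδ
    obtain ⟨hbij, hiff⟩ := hcomb δ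
    have hμδ : μ ∈ Set.Iic (φ δ) := by rw [hδ]; exact hcov.le
    obtain ⟨γ, hγδ, hγμ⟩ := hbij.surjOn hμδ
    have hγδ' : γ ≤ δ := hγδ
    have hne : γ ≠ δ := by
      rintro rfl
      exact hcov.ne (hγμ.symm.trans hδ)
    have hcovγ : γ ⋖ δ := by
      constructor
      · exact lt_of_le_of_ne hγδ' hne
      · intro x hγx hxδ
        have hxδ' : x ∈ Set.Iic δ := hxδ.le
        have h1 : μ < φ x := by
          rw [← hγμ]
          refine lt_of_le_of_ne ((hiff γ hγδ x hxδ').mp hγx.le) ?_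
          intro h
          exact hγx.ne (hbij.injOn hγδ hxδ' h)
        have h2 : φ x < ν := by
          rw [← hδ]
          refine lt_of_le_of_ne ((hiff x hxδ' δ le_rfl).mp hxδ.le) ?_
          intro h
          exact hxδ.ne (hbij.injOn hxδ' (le_refl δ) h)
        exact hcov.2 h1 h2
    refine ⟨γ, hγμ, hcovγ, ?_, ?_⟩
    · exact (hiff α hαδ γ hγδ).mpr (by rw [hγμ]; exact hμ)
    · intro γ' hγ'μ hγ'δ
      exact hbij.injOn hγ'δ.lt.le hγδ (hγ'μ.trans hγμ.symm)
  -- Finset versions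
  set A : Finset P := Set.toFinset (φ ⁻¹' {μ} ∩ Set.Ici α) with hA
  set B : Finset P := Set.toFinset (φ ⁻¹' {ν} ∩ Set.Ici α) with hB
  have hmemA : ∀ γ, γ ∈ A ↔ φ γ = μ ∧ α ≤ γ := by
    intro γ; simp [hA, Set.mem_toFinset]
  have hmemB : ∀ δ, δ ∈ B ↔ φ δ = ν ∧ α ≤ δ := by
    intro δ; simp [hB, Set.mem_toFinset]
  have hLHS : ∑ᶠ γ ∈ φ ⁻¹' {μ} ∩ Set.Ici α, m γ = ∑ γ ∈ A, m γ := by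
    rw [finsum_mem_eq_finite_toFinset_sum _ (Set.toFinite _), Set.toFinite_toFinset]
  have hRHS : ∑ᶠ γ ∈ φ ⁻¹' {ν} ∩ Set.Ici α, m γ = ∑ δ ∈ B, m δ := by
    rw [finsum_mem_eq_finite_toFinset_sum _ (Set.toFinite _), Set.toFinite_toFinset]
  rw [hLHS, hRHS]
  -- decompose B as a disjoint union over A
  have hBdecomp : B = A.biUnion (fun γ => Set.toFinset {δ : P | φ δ = ν ∧ γ ⋖ δ}) := by
    ext δ
    simp only [Finset.mem_biUnion, Set.mem_toFinset, Set.mem_setOf_eq, hmemB, hmemA]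
    constructor
    · rintro ⟨hδν, hαδ⟩
      obtain ⟨γ, hγμ, hγδ, hαγ, _⟩ := key δ hδν hαδ
      exact ⟨γ, ⟨hγμ, hαγ⟩, hδν, hγδ⟩
    · rintro ⟨γ, ⟨hγμ, hαγ⟩, hδν, hγδ⟩
      exact ⟨hδν, le_trans hαγ hγδ.lt.le⟩
  rw [hBdecomp, Finset.sum_biUnion]
  · refine Finset.sum_congr rfl ?_
    intro γ hγ
    rw [hmemA] at hγ
    have hγV : γ ∈ V := hsub ⟨hγ.1, hγ.2⟩
    have := hb γ hγV ν (by rw [hγ.1]; exact hcov)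
    rw [this, finsum_mem_eq_finite_toFinset_sum _ (Set.toFinite _), Set.toFinite_toFinset]
  · -- pairwise disjointness
    intro γ₁ h₁ γ₂ h₂ hne
    rw [Finset.mem_coe] at h₁ h₂
    simp only [Function.onFun]
    rw [Finset.disjoint_left]
    intro δ hδ₁ hδ₂
    rw [Set.mem_toFinset, Set.mem_setOf_eq] at hδ₁ hδ₂
    rw [hmemA] at h₁ h₂
    have hαδ : α ≤ δ := le_trans h₁.2 hδ₁.2.lt.le
    obtain ⟨γ, _, _, _, huniq⟩ := key δ hδ₁.1 hαδ
    exact hne ((huniq γ₁ h₁.1 hδ₁.2).trans (huniq γ₂ h₂.1 hδ₂.2).symm)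
end

section
/- Let φ : Σ → Δ be a combinatorial morphism of finite posets, 𝒱 ⊆ Σ an up-set, and m : 𝒱 → ℤ≥1 a balanced map. For any α ∈ 𝒱 and any β ∈ Δ with φ(α) ⋖ β, the sum of m over φ⁻¹(β) ∩ ↑α equals the sum of m over {η ∈ φ⁻¹(β) : α ⋖ η}; in particular both equal m(α). -/
/-- For a balanced map on an up-set and `β` covering `φ α`, the weighted count of
the fibre over `β` inside `Ici α` equals the weighted count over the covers of
`α` in that fibre; both equal `m α`. -/
theorem balanced_sum_fibre_covers {P Q : Type*}
    [PartialOrder P] [PartialOrder Q] [Fintype P] [Fintype Q]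
    (φ : P → Q) (hφ : Combinatorial φ) (V : Set P) (hV : IsUpperSet V)
    (m : P → ℤ) (hm : ∀ x ∈ V, 1 ≤ m x) (hb : BalancedMap φ V m)
    (α : P) (hα : α ∈ V) (β : Q) (hcov : φ α ⋖ β) :
    (∑ᶠ γ ∈ φ ⁻¹' {β} ∩ Set.Ici α, m γ
        = ∑ᶠ γ ∈ {η : P | φ η = β ∧ α ⋖ η}, m γ) ∧
    m α = ∑ᶠ γ ∈ {η : P | φ η = β ∧ α ⋖ η}, m γ := by
  have hset : φ ⁻¹' {β} ∩ Set.Ici α = {η : P | φ η = β ∧ α ⋖ η} := by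
    ext γ
    constructor
    · rintro ⟨hγβ, hαγ⟩
      have hγβ : φ γ = β := hγβ
      refine ⟨hγβ, ?_, ?_⟩
      · refine lt_of_le_of_ne hαγ ?_
        rintro rfl
        exact hcov.1.ne hγβ
      · intro δ hαδ hδγ
        obtain ⟨hmono, hcomb⟩ := hφ
        obtain ⟨hbij, hrefl⟩ := hcomb γ
        have hαIic : α ∈ Set.Iic γ := le_of_lt (lt_of_lt_of_le hαδ hδγ.le)
        have hδIic : δ ∈ Set.Iic γ := hδγ.le
        have h1 : φ α < φ δ := by
          refine lt_of_le_of_ne (hmono hαδ.le) ?_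
          intro h
          exact hαδ.ne (hbij.injOn hαIic hδIic h)
        have h2 : φ δ < φ γ := by
          refine lt_of_le_of_ne (hmono hδγ.le) ?_
          intro h
          exact hδγ.ne (hbij.injOn hδIic (Set.mem_Iic.mpr le_rfl) h)
        rw [hγβ] at h2
        exact hcov.2 h1 h2
    · rintro ⟨hγβ, hαγ⟩
      exact ⟨hγβ, hαγ.le⟩
  have hb' := hb α hα β hcov
  rw [hset]
  exact ⟨rfl, hb'⟩
end

section
/- Let φ : Σ → Δ be a morphism of finite posets, 𝒱 ⊆ Σ an up-set admitting a balanced map m : 𝒱 → ℤ≥1, and α ∈ 𝒱. Then every upwards path φ(α) = β₀ < β₁ < … < β_k in Δ lifts to a path α = γ₀ < γ₁ < … < γ_k in 𝒱 with φ(γ_i) = β_i for all i. -/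
private lemma step_lift {P Q : Type*} [PartialOrder P] [PartialOrder Q]
    (φ : P → Q) (V : Set P) (hV : IsUpperSet V)
    (m : P → ℤ) (hm : ∀ x ∈ V, 1 ≤ m x) (hb : BalancedMap φ V m)
    (α : P) (hα : α ∈ V) (β : Q) (hcov : φ α ⋖ β) :
    ∃ γ, φ γ = β ∧ α ⋖ γ ∧ γ ∈ V := by
  have h := hb α hα β hcov
  by_contra hcon
  push_neg at hcon
  have hempty : {γ : P | φ γ = β ∧ α ⋖ γ} = ∅ := by
    ext γ
    simp only [Set.mem_setOf_eq, Set.mem_empty_iff_false, iff_false, not_and]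
    intro h1 h2
    exact hcon γ h1 h2 (hV h2.lt.le hα)
  rw [hempty, finsum_mem_empty] at h
  linarith [hm α hα]

private lemma lt_lift {P Q : Type*} [PartialOrder P] [PartialOrder Q] [Fintype Q]
    (φ : P → Q) (V : Set P) (hV : IsUpperSet V)
    (m : P → ℤ) (hm : ∀ x ∈ V, 1 ≤ m x) (hb : BalancedMap φ V m) :
    ∀ n : ℕ, ∀ α ∈ V, ∀ β : Q, φ α < β → (Set.Ioc (φ α) β).ncard ≤ n →
      ∃ γ, φ γ = β ∧ α < γ ∧ γ ∈ V := by
  classical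
  letI : LocallyFiniteOrder Q := Fintype.toLocallyFiniteOrder
  intro n
  induction n with
  | zero =>
    intro α hα β hlt hcard
    exfalso
    have : β ∈ Set.Ioc (φ α) β := ⟨hlt, le_rfl⟩
    have : (Set.Ioc (φ α) β).ncard ≠ 0 := by
      have := (Set.ncard_pos (Set.toFinite _)).mpr ⟨β, this⟩
      omega
    omega
  | succ n ih =>
    intro α hα β hlt hcard
    obtain ⟨c, hc, hcle⟩ := hlt.exists_covby_le
    obtain ⟨γ₁, hφγ₁, hcovγ₁, hγ₁V⟩ := step_lift φ V hV m hm hb α hα c hc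
    rcases eq_or_lt_of_le hcle with rfl | hclt
    · exact ⟨γ₁, hφγ₁, hcovγ₁.lt, hγ₁V⟩
    · have hsub : Set.Ioc (φ γ₁) β ⊆ Set.Ioc (φ α) β := by
        intro x hx
        exact ⟨hc.lt.trans_le (hφγ₁ ▸ hx.1.le), hx.2⟩
      have hne : c ∉ Set.Ioc (φ γ₁) β := by
        rw [hφγ₁]; simp
      have hcmem : c ∈ Set.Ioc (φ α) β := ⟨hc.lt, hcle⟩
      have hcard' : (Set.Ioc (φ γ₁) β).ncard < (Set.Ioc (φ α) β).ncard := by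
        apply Set.ncard_lt_ncard _ (Set.toFinite _)
        exact ⟨hsub, fun hss => hne (hss hcmem)⟩
      obtain ⟨γ, h1, h2, h3⟩ := ih γ₁ hγ₁V β (hφγ₁ ▸ hclt) (by omega)
      exact ⟨γ, h1, hcovγ₁.lt.trans h2, h3⟩

/-- Upwards paths in the target lift along a morphism admitting a balanced map. -/
theorem lift_upwards_path {P Q : Type*}
    [PartialOrder P] [PartialOrder Q] [Fintype P] [Fintype Q]
    (φ : P → Q) (hmono : Monotone φ) (V : Set P) (hV : IsUpperSet V)
    (m : P → ℤ) (hm : ∀ x ∈ V, 1 ≤ m x) (hb : BalancedMap φ V m)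
    (α : P) (hα : α ∈ V) (k : ℕ) (β : Fin (k + 1) → Q)
    (h0 : β 0 = φ α) (hchain : ∀ i : Fin k, β i.castSucc < β i.succ) :
    ∃ γ : Fin (k + 1) → P, γ 0 = α ∧ (∀ i, γ i ∈ V) ∧ (∀ i, φ (γ i) = β i) ∧
      ∀ i : Fin k, γ i.castSucc < γ i.succ := by

  induction k with
  | zero =>
    exact ⟨fun _ => α, rfl, fun _ => hα, fun i => by fin_cases i; exact h0.symm,
      fun i => i.elim0⟩
  | succ k ih =>
    obtain ⟨γ', hγ0, hγV, hγφ, hγchain⟩ := ih (fun i => β i.castSucc)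
      (by simpa using h0)
      (fun i => hchain i.castSucc)
    have hlast : φ (γ' (Fin.last k)) < β (Fin.last (k+1)) := by
      rw [hγφ (Fin.last k)]
      simpa using hchain (Fin.last k)
    obtain ⟨γlast, hφlast, hltlast, hVlast⟩ := lt_lift φ V hV m hm hb
      (Set.Ioc (φ (γ' (Fin.last k))) (β (Fin.last (k+1)))).ncard
      (γ' (Fin.last k)) (hγV _) (β (Fin.last (k+1))) hlast le_rfl
    refine ⟨Fin.snoc γ' γlast, ?_, ?_, ?_, ?_⟩
    · rw [show (0 : Fin (k+2)) = Fin.castSucc 0 by rfl, Fin.snoc_castSucc]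
      exact hγ0
    · intro i
      induction i using Fin.lastCases with
      | last => rw [Fin.snoc_last]; exact hVlast
      | cast j => rw [Fin.snoc_castSucc]; exact hγV j
    · intro i
      induction i using Fin.lastCases with
      | last => rw [Fin.snoc_last]; exact hφlast
      | cast j => rw [Fin.snoc_castSucc]; exact hγφ j
    · intro i
      induction i using Fin.lastCases with
      | last =>
        rw [Fin.succ_last, Fin.snoc_last, Fin.snoc_castSucc]
        exact hltlast
      | cast j =>
        rw [← Fin.castSucc_fin_succ, Fin.snoc_castSucc, Fin.snoc_castSucc]
        exact hγchain j
end

section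
/- Let φ : Σ → Δ be a morphism of finite posets. If there exists a balanced map m : Σ → ℤ≥1 (defined on all of Σ), then φ is an open map with respect to the Alexandrov topologies, i.e., images of up-sets are up-sets. -/
section Aux

variable {P Q : Type*} [PartialOrder P] [PartialOrder Q] [Fintype P] [Fintype Q]

/-- Step lemma: a cover of `φ α` lifts to a cover of `α`. -/
lemma balanced_step (φ : P → Q) (m : P → ℤ) (hm : ∀ x : P, 1 ≤ m x)
    (hb : BalancedMap φ Set.univ m) (α : P) {β : Q} (h : φ α ⋖ β) :
    ∃ γ : P, α ⋖ γ ∧ φ γ = β := by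
  by_contra hc
  push_neg at hc
  have hempty : {γ : P | φ γ = β ∧ α ⋖ γ} = (∅ : Set P) := by
    ext γ; simp only [Set.mem_setOf_eq, Set.mem_empty_iff_false, iff_false]
    rintro ⟨h1, h2⟩; exact hc γ h2 h1
  have := hb α (Set.mem_univ α) β h
  rw [hempty, finsum_mem_empty] at this
  linarith [hm α]

/-- Lifting lemma: any element above `φ α` is the image of an element above `α`. -/
lemma balanced_lift (φ : P → Q) (m : P → ℤ)
    (hm : ∀ x : P, 1 ≤ m x) (hb : BalancedMap φ Set.univ m) :
    ∀ α : P, ∀ β : Q, φ α ≤ β → ∃ γ : P, α ≤ γ ∧ φ γ = β := by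
  have wf : WellFoundedGT P := inferInstance
  intro α
  induction α using (wf.wf.induction) with
  | _ α ih =>
    intro β hle
    rcases eq_or_lt_of_le hle with heq | hlt
    · exact ⟨α, le_refl α, heq⟩
    · have hne : ({x : Q | φ α < x ∧ x ≤ β}).Nonempty := ⟨β, hlt, le_refl β⟩
      have wfq : WellFoundedLT Q := inferInstance
      obtain ⟨δ, ⟨hδ1, hδ2⟩, hmin⟩ := wfq.wf.has_min _ hne
      have hcov : φ α ⋖ δ := by
        refine ⟨hδ1, fun c hc1 hc2 => ?_⟩
        exact hmin c ⟨hc1, le_of_lt (hc2.trans_le hδ2)⟩ hc2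
      obtain ⟨γ, hγcov, hγφ⟩ := balanced_step φ m hm hb α hcov
      obtain ⟨γ', hγ'1, hγ'2⟩ := ih γ hγcov.lt β (hγφ.le.trans hδ2)
      exact ⟨γ', hγcov.le.trans hγ'1, hγ'2⟩

end Aux

/-- If a morphism of finite posets admits a globally defined balanced map, then it
is an open map for the Alexandrov topologies: images of up-sets are up-sets. -/
theorem balanced_implies_open_map {P Q : Type*}
    [PartialOrder P] [PartialOrder Q] [Fintype P] [Fintype Q]
    (φ : P → Q) (hmono : Monotone φ)
    (m : P → ℤ) (hm : ∀ x : P, 1 ≤ m x) (hb : BalancedMap φ Set.univ m) :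
    @IsOpenMap P Q (upTop P) (upTop Q) φ ∧
      ∀ V : Set P, IsUpperSet V → IsUpperSet (φ '' V) := by
  have key : ∀ V : Set P, IsUpperSet V → IsUpperSet (φ '' V) := by
    intro V hV β β' hle hβ
    obtain ⟨α, hαV, rfl⟩ := hβ
    obtain ⟨γ, hγ1, hγ2⟩ := balanced_lift φ m hm hb α β' hle
    exact ⟨γ, hV hγ1 hαV, hγ2⟩
  exact ⟨fun U hU => key U hU, key⟩
end

section
/- Let φ : Σ → Δ be a combinatorial morphism of finite posets, 𝒱 ⊆ Σ an up-set, and m : 𝒱 → ℤ≥1 a balanced map. If α ∈ 𝒱 is maximal in Σ, then φ(α) is maximal in Δ. More generally, for every β ∈ max(φ(𝒱)), every element of φ⁻¹(β) ∩ 𝒱 is maximal in Σ. -/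
/-- For a combinatorial morphism with a balanced map on an up-set `V`:
maximal elements of `V` map to maximal elements, and every element of the fibre in
`V` over a maximal element of `φ '' V` is maximal in the source. -/
theorem balanced_max_fibres {P Q : Type*}
    [PartialOrder P] [PartialOrder Q] [Fintype P] [Fintype Q]
    (φ : P → Q) (hφ : Combinatorial φ) (V : Set P) (hV : IsUpperSet V)
    (m : P → ℤ) (hm : ∀ x ∈ V, 1 ≤ m x) (hb : BalancedMap φ V m) :
    (∀ α ∈ V, IsMax α → IsMax (φ α)) ∧
    ∀ β ∈ φ '' V, (∀ β' ∈ φ '' V, β ≤ β' → β' = β) →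
      ∀ γ ∈ V, φ γ = β → IsMax γ := by
  constructor
  · intro α hα hmax
    by_contra hq
    obtain ⟨β, hcov⟩ := exists_covBy_of_wellFoundedLT hq
    have h := hb α hα β hcov
    have hempty : {γ : P | φ γ = β ∧ α ⋖ γ} = ∅ := by
      ext γ
      simp only [Set.mem_setOf_eq, Set.mem_empty_iff_false, iff_false, not_and]
      intro _ hc
      exact absurd hc.lt (hmax.not_lt)
    rw [hempty, finsum_mem_empty] at h
    have := hm α hα
    omega
  · intro β _ hβmax γ hγ hφγ b hb'
    have hbV : b ∈ V := hV hb' hγ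
    have : φ b = β := hβmax (φ b) ⟨b, hbV, rfl⟩ (hφγ ▸ hφ.1 hb')
    have hinj := (hφ.2 b).1.injOn
    have : γ = b := hinj hb' (le_refl b) (by rw [hφγ, this])
    exact this ▸ le_refl γ
end

section
/- Let φ : Σ → Δ be a combinatorial morphism of finite posets and 𝒰 ⊆ Δ an up-set. If 𝒱 is a union of connected components of φ⁻¹(𝒰), then the restriction-corestriction ψ : 𝒱 → φ(𝒱) of φ is again combinatorial, i.e., ψ maps the down-set of α in 𝒱 order-isomorphically onto the down-set of ψ(α) in φ(𝒱). -/
/-- If `V` is a union of connected components of the preimage of an up-set `U`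
under a combinatorial morphism `φ`, then the restriction-corestriction
`V → φ '' V` is again combinatorial: it maps the down-set of each `α` in `V`
order-isomorphically onto the down-set of `φ α` in `φ '' V`. -/
theorem restrict_combinatorial_to_components {P Q : Type*}
    [PartialOrder P] [PartialOrder Q] [Fintype P] [Fintype Q]
    (φ : P → Q) (hφ : Combinatorial φ) (U : Set Q) (hU : IsUpperSet U)
    (V : Set P) (hVsub : V ⊆ φ ⁻¹' U)
    (hVcc : ∀ x ∈ V, @connectedComponentIn P (upTop P) (φ ⁻¹' U) x ⊆ V) :
    ∀ α ∈ V, Set.BijOn φ {x ∈ V | x ≤ α} {y ∈ φ '' V | y ≤ φ α} ∧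
      ∀ x ∈ {x ∈ V | x ≤ α}, ∀ y ∈ {x ∈ V | x ≤ α}, (x ≤ y ↔ φ x ≤ φ y) := by

  intro α hα
  obtain ⟨hmono, hall⟩ := hφ
  obtain ⟨hbij, hord⟩ := hall α
  have key : ∀ x : P, x ≤ α → φ x ∈ U → x ∈ V := by
    intro x hxα hxU
    apply hVcc α hα
    letI : TopologicalSpace P := upTop P
    have hpre : IsPreconnected ({x, α} : Set P) := by
      intro u v hu hv hcov hus hvs
      have hu' : IsUpperSet u := hu
      have hv' : IsUpperSet v := hv
      have hαu : α ∈ u := by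
        obtain ⟨z, hz, hzu⟩ := hus
        simp only [Set.mem_insert_iff, Set.mem_singleton_iff] at hz
        rcases hz with rfl | rfl
        · exact hu' hxα hzu
        · exact hzu
      have hαv : α ∈ v := by
        obtain ⟨z, hz, hzv⟩ := hvs
        simp only [Set.mem_insert_iff, Set.mem_singleton_iff] at hz
        rcases hz with rfl | rfl
        · exact hv' hxα hzv
        · exact hzv
      exact ⟨α, Set.mem_insert_iff.mpr (Or.inr rfl), hαu, hαv⟩
    have hsub : ({x, α} : Set P) ⊆ φ ⁻¹' U := by
      intro z hz
      simp only [Set.mem_insert_iff, Set.mem_singleton_iff] at hz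
      rcases hz with rfl | rfl
      · exact hxU
      · exact hVsub hα
    exact hpre.subset_connectedComponentIn (Set.mem_insert_iff.mpr (Or.inr rfl)) hsub
      (Set.mem_insert _ _)
  refine ⟨⟨?_, ?_, ?_⟩, ?_⟩
  · intro x hx
    exact ⟨⟨x, hx.1, rfl⟩, hmono hx.2⟩
  · intro x hx y hy h
    exact hbij.injOn hx.2 hy.2 h
  · intro y hy
    obtain ⟨⟨v, hvV, rfl⟩, hyle⟩ := hy
    obtain ⟨x, hxle, hxy⟩ := hbij.surjOn (Set.mem_Iic.mpr hyle)
    refine ⟨x, ⟨key x hxle ?_, hxle⟩, hxy⟩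
    rw [hxy]
    exact hVsub hvV
  · intro x hx y hy
    exact hord x hx.2 y hy.2
end

section
/- Let φ : Σ → Δ be a morphism of finite posets, 𝒱 ⊆ Σ an up-set such that the restriction-corestriction ψ : 𝒱 → φ(𝒱) is combinatorial, and suppose there exists a balanced map m : 𝒱 → ℤ≥1. Then for any α ∈ 𝒱, every path β₀, β₁, …, β_k in the comparability graph of φ(𝒱) with β₀ = φ(α) lifts to a path γ₀, γ₁, …, γ_k in 𝒱 with γ₀ = α and φ(γ_i) = β_i for all i. -/
lemma cover_step {P Q : Type*} [PartialOrder P] [PartialOrder Q]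
    {φ : P → Q} {V : Set P} {m : P → ℤ}
    (hm : ∀ x ∈ V, 1 ≤ m x) (hb : BalancedMap φ V m)
    {α : P} (hα : α ∈ V) {β : Q} (hc : φ α ⋖ β) :
    ∃ γ, φ γ = β ∧ α ⋖ γ := by
  by_contra h
  push_neg at h
  have hS : {γ : P | φ γ = β ∧ α ⋖ γ} = ∅ := by
    ext γ; simp only [Set.mem_setOf_eq, Set.mem_empty_iff_false, iff_false, not_and]
    exact h γ
  have h2 := hb α hα β hc
  rw [hS, finsum_mem_empty] at h2
  have := hm α hα
  omega

lemma lift_up {P Q : Type*} [PartialOrder P] [PartialOrder Q] [Fintype P] [Fintype Q]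
    {φ : P → Q} {V : Set P} (hV : IsUpperSet V) {m : P → ℤ}
    (hm : ∀ x ∈ V, 1 ≤ m x) (hb : BalancedMap φ V m) :
    ∀ n : ℕ, ∀ α ∈ V, ∀ β : Q, φ α ≤ β →
    (Set.Icc (φ α) β).ncard ≤ n → ∃ γ ∈ V, α ≤ γ ∧ φ γ = β := by
  intro n
  induction n with
  | zero =>
    intro α hα β hle hcard
    exfalso
    have h1 : φ α ∈ Set.Icc (φ α) β := ⟨le_rfl, hle⟩
    have : 0 < (Set.Icc (φ α) β).ncard :=
      Set.ncard_pos (Set.toFinite _) |>.mpr ⟨_, h1⟩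
    omega
  | succ n ih =>
    intro α hα β hle hcard
    rcases eq_or_lt_of_le hle with heq | hlt
    · exact ⟨α, hα, le_rfl, heq⟩
    · obtain ⟨β', hcov, hβ'le⟩ := exists_covBy_le_of_lt hlt
      obtain ⟨γ, hφγ, hαγ⟩ := cover_step hm hb hα hcov
      have hγV : γ ∈ V := hV hαγ.lt.le hα
      have hsub : Set.Icc (φ γ) β ⊂ Set.Icc (φ α) β := by
        rw [hφγ]
        constructor
        · intro x hx; exact ⟨hcov.lt.le.trans hx.1, hx.2⟩
        · intro hsub'
          have := hsub' ⟨le_rfl, hle⟩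
          exact hcov.lt.not_ge this.1
      have hlt' : (Set.Icc (φ γ) β).ncard < (Set.Icc (φ α) β).ncard :=
        Set.ncard_lt_ncard hsub (Set.toFinite _)
      obtain ⟨δ, hδV, hγδ, hφδ⟩ := ih γ hγV β (hφγ ▸ hβ'le) (by omega)
      exact ⟨δ, hδV, hαγ.lt.le.trans hγδ, hφδ⟩

/-- Path lifting: if the restriction-corestriction `ψ : V → φ '' V` of `φ` is
combinatorial and `V` carries a balanced map, then every path in the comparability
graph of `φ '' V` starting at `φ α` lifts to a path in `V` starting at `α`. -/
theorem lift_comparability_path {P Q : Type*}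
    [PartialOrder P] [PartialOrder Q] [Fintype P] [Fintype Q]
    (φ : P → Q) (hmono : Monotone φ) (V : Set P) (hV : IsUpperSet V)
    (hψ : ∀ α ∈ V, Set.BijOn φ {x ∈ V | x ≤ α} {y ∈ φ '' V | y ≤ φ α} ∧
      ∀ x ∈ {x ∈ V | x ≤ α}, ∀ y ∈ {x ∈ V | x ≤ α}, (x ≤ y ↔ φ x ≤ φ y))
    (m : P → ℤ) (hm : ∀ x ∈ V, 1 ≤ m x) (hb : BalancedMap φ V m)
    (α : P) (hα : α ∈ V) (k : ℕ) (β : Fin (k + 1) → Q)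
    (hβV : ∀ i, β i ∈ φ '' V) (h0 : β 0 = φ α)
    (hcomp : ∀ i : Fin k, β i.castSucc ≤ β i.succ ∨ β i.succ ≤ β i.castSucc) :
    ∃ γ : Fin (k + 1) → P, γ 0 = α ∧ (∀ i, γ i ∈ V) ∧ (∀ i, φ (γ i) = β i) ∧
      ∀ i : Fin k, γ i.castSucc ≤ γ i.succ ∨ γ i.succ ≤ γ i.castSucc := by
  -- single comparability step
  have step : ∀ a ∈ V, ∀ b : Q, b ∈ φ '' V → (φ a ≤ b ∨ b ≤ φ a) →
      ∃ c ∈ V, (a ≤ c ∨ c ≤ a) ∧ φ c = b := by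
    intro a ha b hbV hcmp
    rcases hcmp with h | h
    · obtain ⟨c, hcV, hac, hφc⟩ :=
        lift_up hV hm hb (Set.Icc (φ a) b).ncard a ha b h le_rfl
      exact ⟨c, hcV, Or.inl hac, hφc⟩
    · obtain ⟨c, hc, hφc⟩ := (hψ a ha).1.2.2 ⟨hbV, h⟩
      exact ⟨c, hc.1, Or.inr hc.2, hφc⟩
  induction k with
  | zero =>
    refine ⟨fun _ => α, rfl, fun _ => hα, fun i => ?_, fun i => i.elim0⟩
    have : i = 0 := Fin.ext (by omega)
    rw [this, h0]
  | succ k ih =>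
    obtain ⟨γ, hγ0, hγV, hγφ, hγc⟩ := ih (fun j => β j.castSucc)
      (fun j => hβV j.castSucc) (by simpa using h0)
      (fun j => by
        have := hcomp j.castSucc
        rwa [Fin.succ_castSucc] at this)
    set a := γ (Fin.last k) with ha_def
    have hcmp := hcomp (Fin.last k)
    rw [Fin.succ_last, ← hγφ (Fin.last k)] at hcmp
    obtain ⟨c, hcV, hac, hφc⟩ := step a (hγV _) (β (Fin.last (k+1)))
      (hβV _) hcmp
    refine ⟨Fin.snoc γ c, ?_, ?_, ?_, ?_⟩
    · rw [show (0 : Fin (k+2)) = Fin.castSucc 0 from rfl, Fin.snoc_castSucc]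
      exact hγ0
    · intro i
      induction i using Fin.lastCases with
      | last => rw [Fin.snoc_last]; exact hcV
      | cast j => rw [Fin.snoc_castSucc]; exact hγV j
    · intro i
      induction i using Fin.lastCases with
      | last => rw [Fin.snoc_last]; exact hφc
      | cast j => rw [Fin.snoc_castSucc]; exact hγφ j
    · intro i
      induction i using Fin.lastCases with
      | last =>
        rw [Fin.succ_last, Fin.snoc_last, Fin.snoc_castSucc]
        exact hac
      | cast j =>
        rw [Fin.succ_castSucc, Fin.snoc_castSucc, Fin.snoc_castSucc]
        exact hγc j
end

section
/- Let φ : Σ → Δ be a morphism of finite posets, 𝒱 ⊆ Σ an up-set such that the restriction-corestriction ψ : 𝒱 → φ(𝒱) is combinatorial, and m : 𝒱 → ℤ≥1 a balanced map. If φ(𝒱) is connected and there exists β ∈ φ(𝒱) such that φ⁻¹(β) ∩ 𝒱 is connected, then 𝒱 is connected. -/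
section Aux

/-- In the Alexandrov topology, a pair of comparable points is preconnected. -/
lemma upTop_pair_preconnected {P : Type*} [Preorder P] {x y : P} (hxy : x ≤ y) :
    @IsPreconnected P (upTop P) {x, y} := by
  intro u v hu hv hcov ⟨a, has, hau⟩ ⟨b, hbs, hbv⟩
  have hu' : IsUpperSet u := hu
  have hv' : IsUpperSet v := hv
  have hyu : y ∈ u := by
    rcases has with rfl | rfl
    · exact hu' hxy hau
    · exact hau
  have hyv : y ∈ v := by
    rcases hbs with rfl | rfl
    · exact hv' hxy hbv
    · exact hbv
  exact ⟨y, Set.mem_insert_of_mem _ rfl, hyu, hyv⟩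

/-- A preconnected set in the Alexandrov topology is connected as a
comparability graph. -/
lemma upTop_reflTransGen_of_preconnected {Q : Type*} [Preorder Q] {S : Set Q}
    (hS : @IsPreconnected Q (upTop Q) S) {x y : Q} (hx : x ∈ S) (hy : y ∈ S) :
    Relation.ReflTransGen (fun a b => a ∈ S ∧ b ∈ S ∧ (a ≤ b ∨ b ≤ a)) x y := by
  set r : Q → Q → Prop := fun a b => a ∈ S ∧ b ∈ S ∧ (a ≤ b ∨ b ≤ a) with hr
  by_contra hny
  set u : Set Q := {z | ∃ w, (w ∈ S ∧ Relation.ReflTransGen r x w) ∧ w ≤ z} with hu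
  set v : Set Q := {z | ∃ w, (w ∈ S ∧ ¬ Relation.ReflTransGen r x w) ∧ w ≤ z} with hv
  have hu' : @IsOpen Q (upTop Q) u := by
    intro a b hab ⟨w, hw, hwa⟩; exact ⟨w, hw, hwa.trans hab⟩
  have hv' : @IsOpen Q (upTop Q) v := by
    intro a b hab ⟨w, hw, hwa⟩; exact ⟨w, hw, hwa.trans hab⟩
  have hcov : S ⊆ u ∪ v := by
    intro z hz
    by_cases h : Relation.ReflTransGen r x z
    · exact Or.inl ⟨z, ⟨hz, h⟩, le_rfl⟩
    · exact Or.inr ⟨z, ⟨hz, h⟩, le_rfl⟩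
  obtain ⟨z, hzS, ⟨w₁, hw₁, hle₁⟩, ⟨w₂, hw₂, hle₂⟩⟩ :=
    hS u v hu' hv' hcov ⟨x, hx, ⟨x, ⟨hx, Relation.ReflTransGen.refl⟩, le_rfl⟩⟩
      ⟨y, hy, ⟨y, ⟨hy, hny⟩, le_rfl⟩⟩
  have hz : Relation.ReflTransGen r x z :=
    hw₁.2.trans (Relation.ReflTransGen.single ⟨hw₁.1, hzS, Or.inl hle₁⟩)
  exact hw₂.2 (hz.trans (Relation.ReflTransGen.single ⟨hzS, hw₂.1, Or.inr hle₂⟩))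

end Aux

/-- If the restriction-corestriction `ψ : V → φ '' V` of `φ` is combinatorial,
`V` carries a balanced map, `φ '' V` is connected and some fibre
`φ ⁻¹' {β} ∩ V` is connected, then `V` is connected. -/
theorem connected_of_connected_image_and_fibre {P Q : Type*}
    [PartialOrder P] [PartialOrder Q] [Fintype P] [Fintype Q]
    (φ : P → Q) (hmono : Monotone φ) (V : Set P) (hV : IsUpperSet V)
    (hψ : ∀ α ∈ V, Set.BijOn φ {x ∈ V | x ≤ α} {y ∈ φ '' V | y ≤ φ α} ∧
      ∀ x ∈ {x ∈ V | x ≤ α}, ∀ y ∈ {x ∈ V | x ≤ α}, (x ≤ y ↔ φ x ≤ φ y))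
    (m : P → ℤ) (hm : ∀ x ∈ V, 1 ≤ m x) (hb : BalancedMap φ V m)
    (himg : @IsConnected Q (upTop Q) (φ '' V))
    (hfib : ∃ β ∈ φ '' V, @IsConnected P (upTop P) (φ ⁻¹' {β} ∩ V)) :
    @IsConnected P (upTop P) V := by
  letI : TopologicalSpace P := upTop P
  letI : TopologicalSpace Q := upTop Q
  classical
  -- Going up one covering step using the balanced map.
  have up_cover : ∀ α ∈ V, ∀ c : Q, φ α ⋖ c → ∃ γ, γ ∈ V ∧ α ⋖ γ ∧ φ γ = c := by
    intro α hα c hc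
    have h := hb α hα c hc
    by_contra hne
    push_neg at hne
    have hempty : {γ : P | φ γ = c ∧ α ⋖ γ} = ∅ := by
      ext γ
      simp only [Set.mem_setOf_eq, Set.mem_empty_iff_false, iff_false, not_and]
      intro h1 h2
      exact (hne γ (hV h2.lt.le hα) h2) h1
    rw [hempty, finsum_mem_empty] at h
    have := hm α hα
    omega
  -- Climbing all the way up from `φ α` to any `β ≥ φ α`.
  have hatomic : IsStronglyAtomic Q :=
    IsStronglyAtomic.of_wellFounded_lt
      (IsWellFounded.wf : WellFounded ((· < ·) : Q → Q → Prop))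
  have hwf : WellFounded ((· > ·) : Q → Q → Prop) :=
    (IsWellFounded.wf : WellFounded ((· > ·) : Q → Q → Prop))
  have climb : ∀ β q : Q, ∀ α, α ∈ V → φ α = q → q ≤ β →
      ∃ γ, γ ∈ V ∧ α ≤ γ ∧ φ γ = β := by
    intro β q
    refine hwf.induction
      (C := fun q => ∀ α, α ∈ V → φ α = q → q ≤ β → ∃ γ, γ ∈ V ∧ α ≤ γ ∧ φ γ = β) q ?_
    intro q IH α hα hq hle
    rcases eq_or_lt_of_le hle with rfl | hlt
    · exact ⟨α, hα, le_rfl, hq⟩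
    · obtain ⟨c, hcov, hcle⟩ := exists_covBy_le_of_lt hlt
      obtain ⟨γ, hγV, hcovγ, hφγ⟩ := up_cover α hα c (hq ▸ hcov)
      obtain ⟨δ, hδV, hγδ, hφδ⟩ := IH c hcov.lt γ hγV hφγ hcle
      exact ⟨δ, hδV, hcovγ.lt.le.trans hγδ, hφδ⟩
  -- Going down inside `V` using combinatoriality.
  have down : ∀ α ∈ V, ∀ y ∈ φ '' V, y ≤ φ α → ∃ x, x ∈ V ∧ x ≤ α ∧ φ x = y := by
    intro α hα y hyS hyle
    obtain ⟨x, hx, rfl⟩ := (hψ α hα).1.surjOn ⟨hyS, hyle⟩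
    exact ⟨x, hx.1, hx.2, rfl⟩
  obtain ⟨β₀, hβ₀S, hF⟩ := hfib
  set S : Set Q := φ '' V with hS
  set r : Q → Q → Prop := fun a b => a ∈ S ∧ b ∈ S ∧ (a ≤ b ∨ b ≤ a) with hrdef
  -- Following a comparability chain in the image.
  have chain : ∀ q : Q, Relation.ReflTransGen r q β₀ → ∀ α, α ∈ V → φ α = q →
      ∃ t : Set P, t ⊆ V ∧ IsPreconnected t ∧ α ∈ t ∧ ∃ z ∈ t, φ z = β₀ := by
    intro q h
    induction h using Relation.ReflTransGen.head_induction_on with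
    | refl =>
      intro α hα hq
      exact ⟨{α}, by simpa using hα, isPreconnected_singleton, rfl, α, rfl, hq⟩
    | head hstep _ IH =>
      rename_i a c _
      intro α hα hq
      obtain ⟨haS, hcS, hcomp⟩ := hstep
      rcases hcomp with hle | hle
      · -- go up from `a = φ α` to `c`
        obtain ⟨γ, hγV, hαγ, hφγ⟩ := climb c a α hα hq hle
        obtain ⟨t', ht'V, ht'pc, hγt', z, hzt', hz⟩ := IH γ hγV hφγ
        refine ⟨{α, γ} ∪ t', ?_, ?_, Or.inl (Set.mem_insert _ _), z, Or.inr hzt', hz⟩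
        · rintro w (hw | hw)
          · rcases hw with rfl | rfl
            · exact hα
            · exact hγV
          · exact ht'V hw
        · exact IsPreconnected.union γ (Set.mem_insert_of_mem _ rfl) hγt'
            (upTop_pair_preconnected hαγ) ht'pc
      · -- go down from `a = φ α` to `c`
        obtain ⟨x, hxV, hxα, hφx⟩ := down α hα c hcS (hq ▸ hle)
        obtain ⟨t', ht'V, ht'pc, hxt', z, hzt', hz⟩ := IH x hxV hφx
        refine ⟨{x, α} ∪ t', ?_, ?_, Or.inl (Set.mem_insert_of_mem _ rfl), z, Or.inr hzt', hz⟩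
        · rintro w (hw | hw)
          · rcases hw with rfl | rfl
            · exact hxV
            · exact hα
          · exact ht'V hw
        · exact IsPreconnected.union x (Set.mem_insert _ _) hxt'
            (upTop_pair_preconnected hxα) ht'pc
  obtain ⟨x₀, hx₀F⟩ := hF.nonempty
  constructor
  · exact ⟨x₀, hx₀F.2⟩
  · refine isPreconnected_of_forall x₀ ?_
    intro y hy
    have hrt : Relation.ReflTransGen r (φ y) β₀ :=
      upTop_reflTransGen_of_preconnected himg.isPreconnected ⟨y, hy, rfl⟩ hβ₀S
    obtain ⟨t, htV, htpc, hyt, z, hzt, hz⟩ := chain (φ y) hrt y hy rfl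
    have hzF : z ∈ φ ⁻¹' {β₀} ∩ V := ⟨hz, htV hzt⟩
    refine ⟨t ∪ (φ ⁻¹' {β₀} ∩ V), ?_, Or.inr hx₀F, Or.inl hyt, ?_⟩
    · rintro w (hw | hw)
      · exact htV hw
      · exact hw.2
    · exact IsPreconnected.union z hzt hzF htpc hF.isPreconnected
end
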